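/- arXiv:math/0303345 — 3 statements merged into one kernel-verified Lean document; each statement's English description precedes it below -/
import Mathlib

section
/- Let μ be a regular uncountable cardinal and S ⊆ μ stationary. Suppose D ⊆ S × S is a relation that concentrates on tails, i.e., for every α ∈ S there exists β(α) < α such that D(α,β) ↔ D(α,β') for all β, β' ∈ S with β(α) ≤ β, β' < α. Then there is a stationary S' ⊆ S such that D(α,β) ↔ D(α',β') for all pairs α > β and α' > β' from S'. -/
/-- `o` is an accumulation point of `C`. -/
def IsAcc (o : Ordinal) (C : Set Ordinal) : Prop :=
  o ≠ 0 ∧ ∀ b < o, ∃ c ∈ C, b < c ∧ c < o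

/-- `C` is closed and unbounded (a club) in `μ`. -/
def IsClubIn (C : Set Ordinal) (μ : Ordinal) : Prop :=
  (∀ o < μ, IsAcc o C → o ∈ C) ∧ ∀ b < μ, ∃ c ∈ C, b < c ∧ c < μ

/-- `S` is a stationary subset of `μ`. -/
def IsStationaryIn (S : Set Ordinal) (μ : Ordinal) : Prop :=
  S ⊆ Set.Iio μ ∧ ∀ C : Set Ordinal, IsClubIn C μ → (S ∩ C).Nonempty


/-! By Fodor's lemma the regressive map `α ↦ β(α)` is constant, say `γ`, on a stationary
`S₁ ⊆ S`. All points of `S₁` lie above `γ`, so for `α ∈ S₁` the truth value of `D α β` with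
`β ∈ S₁`, `β < α`, depends on `α` alone. Since two clubs meet in a club, one of the two classes
of `S₁` under this truth value is stationary, and `D` is homogeneous on it.

Both Fodor's lemma (via diagonal intersections) and the intersection of two clubs reduce to the
fact that the supremum `nfp F b` of the iterates of a step function `F` lies in a club `C` as
soon as every step `(x, F x)` meets `C`. -/

open Cardinal Set
open Ordinal (nfp lt_nfp_iff iterate_le_nfp nfp_lt_ord)

theorem IsAcc.mono {o : Ordinal} {C C' : Set Ordinal} (h : IsAcc o C) (hCC' : C ⊆ C') :
    IsAcc o C' :=
  ⟨h.1, fun b hb => let ⟨c, hc, hbc, hco⟩ := h.2 b hb; ⟨c, hCC' hc, hbc, hco⟩⟩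

theorem IsClubIn.nfp_mem {C : Set Ordinal} {κ : Ordinal} (hC : IsClubIn C κ)
    {F : Ordinal → Ordinal} {b y : Ordinal} (hκ : nfp F b < κ) (hy : y < nfp F b)
    (hF : ∀ x < κ, y < x → ∃ c ∈ C, x < c ∧ c < F x) : nfp F b ∈ C := by
  refine hC.1 _ hκ ⟨hy.ne_bot, fun z hz => ?_⟩
  obtain ⟨n, hn⟩ := lt_nfp_iff.1 (max_lt hy hz)
  obtain ⟨c, hcC, hnc, hcF⟩ :=
    hF _ ((iterate_le_nfp F b n).trans_lt hκ) ((le_max_left y z).trans_lt hn)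
  refine ⟨c, hcC, ((le_max_right y z).trans_lt hn).trans hnc, hcF.trans_le ?_⟩
  rw [← Function.iterate_succ_apply' F n b]
  exact iterate_le_nfp F b (n + 1)

theorem IsClubIn.inter {κ : Ordinal} (hκ : ℵ₀ < κ.cof) {C C' : Set Ordinal}
    (hC : IsClubIn C κ) (hC' : IsClubIn C' κ) : IsClubIn (C ∩ C') κ := by
  refine ⟨fun o ho hacc => ⟨hC.1 o ho (hacc.mono inter_subset_left),
    hC'.1 o ho (hacc.mono inter_subset_right)⟩, fun b hb => ?_⟩
  choose! f hfC hf hfκ using hC.2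
  choose! f' hfC' hf' hfκ' using hC'.2
  have hlim : Order.IsSuccLimit κ := Ordinal.one_lt_cof_iff.1 (one_lt_aleph0.trans hκ)
  set F := fun x => max (f x) (f' x) + 1
  have hFκ : ∀ x < κ, F x < κ := fun x hx => hlim.add_one_lt (max_lt (hfκ x hx) (hfκ' x hx))
  have hbF : b < nfp F b :=
    ((hf b hb).trans_le (le_max_left _ _)).trans (lt_add_one _) |>.trans_le
      (iterate_le_nfp F b 1)
  have hFb : nfp F b < κ := nfp_lt_ord hκ hFκ hb
  refine ⟨nfp F b, ⟨hC.nfp_mem hFb hbF fun x hx _ => ?_, hC'.nfp_mem hFb hbF fun x hx _ => ?_⟩,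
    hbF, hFb⟩
  · exact ⟨f x, hfC x hx, hf x hx, (le_max_left _ _).trans_lt (lt_add_one _)⟩
  · exact ⟨f' x, hfC' x hx, hf' x hx, (le_max_right _ _).trans_lt (lt_add_one _)⟩

theorem IsStationaryIn.or_of_union {κ : Ordinal} (hκ : ℵ₀ < κ.cof) {s t : Set Ordinal}
    (h : IsStationaryIn (s ∪ t) κ) : IsStationaryIn s κ ∨ IsStationaryIn t κ := by
  by_contra! hst
  simp only [IsStationaryIn, not_and, not_forall, exists_prop, not_nonempty_iff_eq_empty] at hst
  obtain ⟨C, hC, hsC⟩ := hst.1 (subset_union_left.trans h.1)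
  obtain ⟨C', hC', htC'⟩ := hst.2 (subset_union_right.trans h.1)
  obtain ⟨α, hα, hαC, hαC'⟩ := h.2 _ (hC.inter hκ hC')
  rcases hα with hαs | hαt
  · exact hsC.subset ⟨hαs, hαC⟩
  · exact htC'.subset ⟨hαt, hαC'⟩

theorem IsStationaryIn.exists_subset_homogeneous {κ : Ordinal} (hκ : ℵ₀ < κ.cof)
    {S : Set Ordinal} (hS : IsStationaryIn S κ) (p : Ordinal → Prop) :
    ∃ T ⊆ S, IsStationaryIn T κ ∧ ∀ α ∈ T, ∀ α' ∈ T, (p α ↔ p α') := by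
  have hS' : IsStationaryIn ({α ∈ S | p α} ∪ {α ∈ S | ¬ p α}) κ := by
    simpa only [← sep_or, em, and_true, ofPred_mem_eq] using hS
  rcases hS'.or_of_union hκ with hT | hT
  · exact ⟨_, sep_subset S p, hT, fun α hα α' hα' => iff_of_true hα.2 hα'.2⟩
  · exact ⟨_, sep_subset S _, hT, fun α hα α' hα' => iff_of_false hα.2 hα'.2⟩

theorem isClubIn_diagInter {μ : Cardinal} (hreg : μ.IsRegular) (hunc : ℵ₀ < μ)
    {C : Ordinal → Set Ordinal} (hC : ∀ i, IsClubIn (C i) μ.ord) :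
    IsClubIn {α | ∀ i < α, α ∈ C i} μ.ord := by
  have hκ : ℵ₀ < μ.ord.cof := by rwa [hreg.cof_ord]
  have hlim : Order.IsSuccLimit μ.ord := Ordinal.one_lt_cof_iff.1 (one_lt_aleph0.trans hκ)
  refine ⟨fun o ho hacc i hi => (hC i).1 o ho ⟨hacc.1, fun b hb => ?_⟩, fun b hb => ?_⟩
  · obtain ⟨c, hc, hbic, hco⟩ := hacc.2 (max b i) (max_lt hb hi)
    exact ⟨c, hc i ((le_max_right b i).trans_lt hbic), (le_max_left b i).trans_lt hbic, hco⟩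
  choose! f hfC hf hfκ using fun i => (hC i).2
  set F := fun x => ⨆ i : Iio x, f i x + 1
  have hFκ : ∀ x < μ.ord, F x < μ.ord := by
    intro x hx
    refine Ordinal.lift_iSup_add_one_lt_of_lt_cof ?_ fun i => hfκ i x hx
    rw [mk_Iio_ordinal, ← Ordinal.lift_cof, hreg.cof_ord, lift_lift, lift_lt]
    exact lt_ord.1 hx
  have ho : nfp F (b + 1) < μ.ord := nfp_lt_ord hκ hFκ (hlim.add_one_lt hb)
  refine ⟨nfp F (b + 1), fun i hi => (hC i).nfp_mem ho hi fun x hx hix => ?_,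
    (lt_add_one b).trans_le (Ordinal.le_nfp F _), ho⟩
  exact ⟨f i x, hfC i x hx, hf i x hx,
    (lt_add_one _).trans_le (Ordinal.le_iSup (fun j : Iio x => f j x + 1) ⟨i, hix⟩)⟩

theorem IsStationaryIn.fodor {μ : Cardinal} (hreg : μ.IsRegular) (hunc : ℵ₀ < μ)
    {S : Set Ordinal} (hS : IsStationaryIn S μ.ord) {f : Ordinal → Ordinal}
    (hf : ∀ α ∈ S, f α < α) : ∃ γ, IsStationaryIn {α ∈ S | f α = γ} μ.ord := by
  by_contra! h
  simp only [IsStationaryIn, not_and, not_forall, exists_prop, not_nonempty_iff_eq_empty] at h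
  choose C hC hSC using fun γ => h γ ((sep_subset S _).trans hS.1)
  obtain ⟨α, hαS, hαC⟩ := hS.2 _ (isClubIn_diagInter hreg hunc hC)
  exact (hSC (f α)).subset ⟨⟨hαS, rfl⟩, hαC (f α) (hf α hαS)⟩

/-- If a relation `D` on a stationary `S ⊆ μ` concentrates on tails, then `D`
is homogeneous on decreasing pairs from a stationary subset. -/
theorem stmt6 (μ : Cardinal) (hreg : μ.IsRegular) (hunc : Cardinal.aleph0 < μ)
    (S : Set Ordinal) (hS : IsStationaryIn S μ.ord)
    (D : Ordinal → Ordinal → Prop)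
    (hconc : ∀ α ∈ S, ∃ g < α, ∀ β ∈ S, ∀ β' ∈ S,
      g ≤ β → β < α → g ≤ β' → β' < α → (D α β ↔ D α β')) :
    ∃ S' ⊆ S, IsStationaryIn S' μ.ord ∧
      ∀ α ∈ S', ∀ β ∈ S', ∀ α' ∈ S', ∀ β' ∈ S',
        β < α → β' < α' → (D α β ↔ D α' β') := by
  choose! g hg hgD using hconc
  obtain ⟨γ, hγ⟩ := hS.fodor hreg hunc hg
  set S₁ := {α ∈ S | g α = γ}
  set c : Ordinal → Prop := fun α => ∃ β ∈ S₁, β < α ∧ D α β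
  have hD : ∀ α ∈ S₁, ∀ β ∈ S₁, β < α → (D α β ↔ c α) := by
    intro α hα β hβ hβα
    refine ⟨fun h => ⟨β, hβ, hβα, h⟩, fun ⟨β', hβ', hβ'α, h⟩ => ?_⟩
    have hgα : ∀ β ∈ S₁, g α ≤ β := fun β hβ => hα.2 ▸ hβ.2 ▸ (hg β hβ.1).le
    exact (hgD α hα.1 β hβ.1 β' hβ'.1 (hgα β hβ) hβα (hgα β' hβ') hβ'α).2 h
  have hκ : ℵ₀ < μ.ord.cof := by rwa [hreg.cof_ord]
  obtain ⟨T, hTS₁, hT, hTc⟩ := hγ.exists_subset_homogeneous hκ c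
  refine ⟨T, fun α hα => (hTS₁ hα).1, hT, fun α hα β hβ α' hα' β' hβ' hβα hβ'α' => ?_⟩
  rw [hD α (hTS₁ hα) β (hTS₁ hβ) hβα, hD α' (hTS₁ hα') β' (hTS₁ hβ') hβ'α']
  exact hTc α hα α' hα'
end

section
/- Let μ be a regular uncountable cardinal, δ an ordinal, and S ⊆ μ a stationary set. For any sequence ⟨η_α : α ∈ S⟩ of finite strictly decreasing sequences of ordinals below δ, there is a stationary S' ⊆ S such that the subsequence forms a Δ-system: (1) all η_α for α ∈ S' have the same length n; (2) for each i < n, the sequence ⟨η_α(i) : α ∈ S'⟩ is either constant or strictly increasing (in the index α); (3) for all i < j < n and all α, β ∈ S', η_α(i) ≠ η_β(j). -/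
/-!
Everything happens in the well-order `Iio μ.ord`, where clubs and stationary sets are Mathlib's
`IsClub` and `IsStationary`. Diagonal intersections of clubs are clubs, which gives Fodor's lemma.
The length of `η α` takes countably many values, so it is constant on a stationary set.

A map `f` into a well-order is constant or strictly increasing on a stationary set: after shrinking
`s` so that no `{x | f x < f y}` is stationary, either stationarily many points have their value
dominated by that of an earlier point, and Fodor fixes that earlier point `y`, leaving `f = f y` on
a stationary set; or the remaining points form a stationary set on which `f` strictly increases.
Doing this coordinate by coordinate gives (2).

For (3), with `i < j`, a collision `η α i = η β j` is impossible when coordinate `i` is constant,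
as `η β j < η β i`. Otherwise coordinate `i` is injective. If coordinate `j` is constant, the `α`
occurring in collisions share one value of coordinate `i`, so there is at most one of them. If it
is injective too, a collision forces `α < β`, and by Fodor the `β` occurring in collisions form a
nonstationary set. A club avoiding these sets for all pairs `(i, j)` is intersected in.
-/

open Cardinal Order Set

def ConstOrStrictMonoOn {α β : Type*} [Preorder α] [Preorder β] (f : α → β) (s : Set α) : Prop :=
  (∀ x ∈ s, ∀ y ∈ s, f x = f y) ∨ StrictMonoOn f s

theorem ConstOrStrictMonoOn.mono {α β : Type*} [Preorder α] [Preorder β] {f : α → β}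
    {s t : Set α} (h : ConstOrStrictMonoOn f s) (hts : t ⊆ s) : ConstOrStrictMonoOn f t :=
  h.imp (fun h x hx y hy => h x (hts hx) y (hts hy)) (fun h => h.mono hts)

theorem List.Pairwise.rel_getD_of_lt {γ : Type*} {R : γ → γ → Prop} {l : List γ}
    (hl : l.Pairwise R) {i j : ℕ} (hij : i < j) (hj : j < l.length) (d : γ) :
    R (l.getD i d) (l.getD j d) := by
  rw [List.getD_eq_getElem _ _ (hij.trans hj), List.getD_eq_getElem _ _ hj]
  exact List.pairwise_iff_getElem.1 hl i j _ hj hij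

section
variable {α : Type*} [LinearOrder α] {β : Type*} [LinearOrder β] {s : Set α}

def diagInter (C : α → Set α) : Set α := {x | ∀ y < x, x ∈ C y}

theorem dirSupClosed_diagInter {C : α → Set α} (hC : ∀ x, DirSupClosed (C x)) :
    DirSupClosed (diagInter C) := by
  intro d hd _ _ a ha y hya
  obtain ⟨x, hxd, hyx⟩ : ∃ x ∈ d, y < x := by
    by_contra! h
    exact (ha.2 h).not_gt hya
  refine hC y (d := {z ∈ d | y < z}) (fun z hz => hd hz.1 y hz.2) ⟨x, hxd, hyx⟩
    (.of_linearOrder _) ⟨fun z hz => ha.1 hz.1, fun b hb => ha.2 fun z hz => ?_⟩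
  rcases lt_or_ge y z with hyz | hzy
  · exact hb ⟨hz, hyz⟩
  · exact hzy.trans (hyx.le.trans (hb ⟨hxd, hyx⟩))

theorem isClub_Ioi [NoMaxOrder α] (a : α) : IsClub (Ioi a) := by
  refine ⟨fun d hd ⟨x, hx⟩ _ b hb => (hd hx).trans_le (hb.1 hx), fun x => ?_⟩
  obtain ⟨y, hy⟩ := exists_gt (max x a)
  exact ⟨y, (le_max_right x a).trans_lt hy, (le_max_left x a).trans hy.le⟩

theorem noMaxOrder_of_aleph0_lt_cof (hα : ℵ₀ < cof α) : NoMaxOrder α := by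
  have : Nonempty α := by
    by_contra h
    rw [not_nonempty_iff] at h
    simp at hα
  exact (noTopOrder_iff_noMaxOrder α).1 (one_lt_cof_iff.1 (one_lt_aleph0.trans hα))

theorem IsStationary.nontrivial (hα : ℵ₀ < cof α) (hs : IsStationary s) :
    s.Nontrivial := by
  have := noMaxOrder_of_aleph0_lt_cof hα
  obtain ⟨a, ha⟩ := hs.nonempty
  obtain ⟨b, hb, hab⟩ := hs (isClub_Ioi a)
  exact ⟨a, ha, b, hb, hab.ne⟩

theorem IsStationary.exists_subset_forall_not_isStationary_lt [WellFoundedLT β]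
    (hs : IsStationary s) (f : α → β) :
    ∃ t ⊆ s, IsStationary t ∧ ∀ y ∈ t, ¬ IsStationary {x ∈ t | f x < f y} := by
  by_cases h : ∃ b, IsStationary {x ∈ s | f x < b}
  · obtain ⟨b, hb, hmin⟩ := wellFounded_lt.has_min _ h
    refine ⟨_, sep_subset s _, hb, fun y hy hy' => hmin _ (hy'.mono ?_) hy.2⟩
    exact fun x hx => ⟨hx.1.1, hx.2⟩
  · push Not at h
    exact ⟨s, subset_rfl, hs, fun y _ => h (f y)⟩

variable [WellFoundedLT α]

theorem IsStationary.inter_isClub {t : Set α} (hα : cof α ≠ ℵ₀) (hs : IsStationary s)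
    (ht : IsClub t) : IsStationary (s ∩ t) := fun u hu => by
  simpa only [inter_assoc] using hs (ht.inter hα hu)

theorem IsStationary.diff {t : Set α} (hα : cof α ≠ ℵ₀) (hs : IsStationary s)
    (ht : ¬ IsStationary t) : IsStationary (s \ t) := by
  obtain ⟨C, hC, hdisj⟩ := not_isStationary_iff.1 ht
  exact (hs.inter_isClub hα hC).mono fun x hx =>
    ⟨hx.1, fun hxt => hdisj.notMem_of_mem_left hxt hx.2⟩

-- Together with `ℵ₀ < cof α`, this makes `α` order-isomorphic to `Iio κ.ord` for a regular
-- uncountable cardinal `κ`.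
variable [IsRegularCardinalOrder α]

theorem isCofinal_diagInter (hα : ℵ₀ < cof α) {C : α → Set α}
    (hC : ∀ x, IsClub (C x)) : IsCofinal (diagInter C) := by
  have hD : ∀ z, IsClub (⋂ w : Iio z, C w) := fun z =>
    IsClub.iInter hα.ne' (by simpa using mk_Iio_lt z (ord_cardinalMk (α := α))) fun w => hC w.1
  -- `g (n + 1)` lies in every `C z` with `z < g n`, so the supremum of `g` is a limit of `C y`
  -- for each `y` below it.
  choose next hnext hle using fun z => (hD z).isCofinal z
  intro x
  set g : ℕ → α := fun n => next^[n] x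
  have hgs : ∀ n, g (n + 1) = next (g n) := fun n => Function.iterate_succ_apply' next n x
  have hmono : Monotone g := monotone_nat_of_le_succ fun n => (hgs n).symm ▸ hle (g n)
  have hbdd : BddAbove (range g) := .of_not_isCofinal fun h =>
    (cof_le h).not_gt (hα.trans_le' (by simpa using mk_range_le_lift (f := g)))
  obtain ⟨a, ha⟩ : ∃ a, IsLUB (range g) a := by
    obtain ⟨a, hub, hleast⟩ := wellFounded_lt.has_min _ hbdd
    exact ⟨a, hub, fun b hb => not_lt.1 (hleast b hb)⟩
  refine ⟨a, fun y hy => ?_, ha.1 ⟨0, rfl⟩⟩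
  obtain ⟨n, hn⟩ : ∃ n, y < g n := by
    by_contra! h
    exact (ha.2 (forall_mem_range.2 h)).not_gt hy
  refine (hC y).isLUB_mem (t := range fun m => g (n + m + 1)) ?_ (range_nonempty _)
    ⟨fun _ ⟨m, hm⟩ => hm ▸ ha.1 ⟨_, rfl⟩, fun b hb => ha.2 (forall_mem_range.2 fun k => ?_)⟩
  · rintro _ ⟨m, rfl⟩
    show g (n + m + 1) ∈ C y
    rw [hgs]
    exact mem_iInter.1 (hnext _) ⟨y, hn.trans_le (hmono (Nat.le_add_right n m))⟩
  · exact (hmono (by omega)).trans (hb ⟨k, rfl⟩)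

theorem isClub_diagInter (hα : ℵ₀ < cof α) {C : α → Set α}
    (hC : ∀ x, IsClub (C x)) : IsClub (diagInter C) :=
  ⟨dirSupClosed_diagInter fun x => (hC x).dirSupClosed, isCofinal_diagInter hα hC⟩

/-- Fodor's pressing-down lemma. -/
theorem IsStationary.exists_isStationary_of_forall_exists_lt
    (hα : ℵ₀ < cof α) (hs : IsStationary s) {r : α → α → Prop}
    (hr : ∀ x ∈ s, ∃ y < x, r x y) : ∃ y, IsStationary {x ∈ s | r x y} := by
  by_contra! h
  simp only [not_isStationary_iff] at h
  choose C hC hdisj using h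
  obtain ⟨x, hxs, hxC⟩ := hs (isClub_diagInter hα hC)
  obtain ⟨y, hyx, hxy⟩ := hr x hxs
  exact (hdisj y).notMem_of_mem_left ⟨hxs, hxy⟩ (hxC y hyx)

theorem IsStationary.exists_subset_constOrStrictMonoOn [WellFoundedLT β] (hα : ℵ₀ < cof α)
    (hs : IsStationary s) (f : α → β) : ∃ t ⊆ s, IsStationary t ∧ ConstOrStrictMonoOn f t := by
  obtain ⟨s₀, hs₀s, hs₀, hlt⟩ := hs.exists_subset_forall_not_isStationary_lt f
  set B := {x ∈ s₀ | ∃ y < x, y ∈ s₀ ∧ f x ≤ f y}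
  by_cases hB : IsStationary B
  · obtain ⟨y, hy⟩ := hB.exists_isStationary_of_forall_exists_lt hα fun x hx => hx.2
    obtain ⟨-, -, hys₀, -⟩ := hy.nonempty
    refine ⟨_, fun x hx => hs₀s hx.1.1.1, hy.diff hα.ne' (hlt y hys₀), Or.inl ?_⟩
    have hfx : ∀ x ∈ {x ∈ B | y ∈ s₀ ∧ f x ≤ f y} \ {x ∈ s₀ | f x < f y}, f x = f y :=
      fun x hx => hx.1.2.2.antisymm (not_lt.1 fun h => hx.2 ⟨hx.1.1.1, h⟩)
    exact fun x hx x' hx' => (hfx x hx).trans (hfx x' hx').symm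
  · refine ⟨s₀ \ B, sdiff_subset.trans hs₀s, hs₀.diff hα.ne' hB, Or.inr fun x hx x' hx' hxx' => ?_⟩
    exact not_le.1 fun h => hx'.2 ⟨hx'.1, x, hxx', hx.1, h⟩

theorem IsStationary.exists_subset_forall_lt_constOrStrictMonoOn [WellFoundedLT β]
    (hα : ℵ₀ < cof α) (hs : IsStationary s) (F : ℕ → α → β) (n : ℕ) :
    ∃ t ⊆ s, IsStationary t ∧ ∀ i < n, ConstOrStrictMonoOn (F i) t := by
  induction n with
  | zero => exact ⟨s, subset_rfl, hs, fun i hi => absurd hi (Nat.not_lt_zero i)⟩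
  | succ n ih =>
    obtain ⟨t, hts, ht, hF⟩ := ih
    obtain ⟨t', ht't, ht', hFn⟩ := ht.exists_subset_constOrStrictMonoOn hα (F n)
    refine ⟨t', ht't.trans hts, ht', fun i hi => ?_⟩
    rcases Nat.lt_succ_iff_lt_or_eq.1 hi with hi | rfl
    exacts [(hF i hi).mono ht't, hFn]

theorem ConstOrStrictMonoOn.exists_isClub_forall_ne (hα : ℵ₀ < cof α) {f g : α → β}
    (hf : ConstOrStrictMonoOn f s) (hg : ConstOrStrictMonoOn g s) (hgf : ∀ x ∈ s, g x < f x) :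
    ∃ C, IsClub C ∧ ∀ x ∈ s ∩ C, ∀ y ∈ s ∩ C, f x ≠ g y := by
  suffices h : ∃ T, ¬ IsStationary T ∧ ∀ x ∈ s, ∀ y ∈ s, f x = g y → x ∈ T ∨ y ∈ T by
    obtain ⟨T, hT, hcover⟩ := h
    obtain ⟨C, hC, hdisj⟩ := not_isStationary_iff.1 hT
    refine ⟨C, hC, fun x hx y hy hxy => ?_⟩
    rcases hcover x hx.1 y hy.1 hxy with h | h
    exacts [hdisj.notMem_of_mem_left h hx.2, hdisj.notMem_of_mem_left h hy.2]
  rcases hf with hf | hf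
  · exact ⟨∅, not_isStationary_empty, fun x hx y hy hxy =>
      absurd hxy ((hgf y hy).trans_eq (hf y hy x hx)).ne'⟩
  rcases hg with hg | hg
  · refine ⟨{x ∈ s | ∃ y ∈ s, f x = g y}, fun hT => ?_, fun x hx y hy hxy => .inl ⟨hx, y, hy, hxy⟩⟩
    obtain ⟨x, ⟨hx, y, hy, hxy⟩, x', ⟨hx', y', hy', hxy'⟩, hne⟩ := hT.nontrivial hα
    exact hne (hf.injOn hx hx' (by rw [hxy, hxy', hg y hy y' hy']))
  · refine ⟨{y ∈ s | ∃ x ∈ s, f x = g y}, fun hT => ?_, fun x hx y hy hxy => .inr ⟨hy, x, hx, hxy⟩⟩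
    -- `f x = g y < f y` forces `x < y`.
    have hlt : ∀ y ∈ {y ∈ s | ∃ x ∈ s, f x = g y}, ∃ x < y, x ∈ s ∧ f x = g y := by
      rintro y ⟨hy, x, hx, hxy⟩
      refine ⟨x, lt_of_not_ge fun hyx => ?_, hx, hxy⟩
      exact (hgf y hy).not_ge (hxy ▸ hf.monotoneOn hy hx hyx)
    obtain ⟨x, hx⟩ := hT.exists_isStationary_of_forall_exists_lt hα hlt
    obtain ⟨y, ⟨⟨hy, -⟩, -, hxy⟩, y', ⟨⟨hy', -⟩, -, hxy'⟩, hne⟩ := hx.nontrivial hα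
    exact hne (hg.injOn hy hy' (hxy.symm.trans hxy'))

theorem exists_isClub_forall_ne_of_forall_lt (hα : ℵ₀ < cof α) (F : ℕ → α → β) (n : ℕ)
    (hF : ∀ i < n, ConstOrStrictMonoOn (F i) s)
    (hdec : ∀ x ∈ s, ∀ i j, i < j → j < n → F j x < F i x) :
    ∃ C, IsClub C ∧ ∀ i j, i < j → j < n → ∀ x ∈ s ∩ C, ∀ y ∈ s ∩ C, F i x ≠ F j y := by
  have h : ∀ p : ℕ × ℕ, ∃ C, IsClub C ∧
      (p.1 < p.2 → p.2 < n → ∀ x ∈ s ∩ C, ∀ y ∈ s ∩ C, F p.1 x ≠ F p.2 y) := by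
    rintro ⟨i, j⟩
    by_cases hij : i < j ∧ j < n
    · obtain ⟨C, hC, hne⟩ := (hF i (hij.1.trans hij.2)).exists_isClub_forall_ne hα (hF j hij.2)
        fun x hx => hdec x hx i j hij.1 hij.2
      exact ⟨C, hC, fun _ _ => hne⟩
    · exact ⟨univ, .univ, fun h1 h2 => (hij ⟨h1, h2⟩).elim⟩
  choose C hC hne using h
  refine ⟨⋂ p, C p, IsClub.iInter_of_countable hα.ne' hC, fun i j hij hjn x hx y hy => ?_⟩
  exact hne (i, j) hij hjn x ⟨hx.1, mem_iInter.1 hx.2 _⟩ y ⟨hy.1, mem_iInter.1 hy.2 _⟩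

theorem IsStationary.exists_deltaSystem [WellFoundedLT β] (hα : ℵ₀ < cof α)
    (hs : IsStationary s) (η : α → List β) (hη : ∀ x ∈ s, (η x).Pairwise (· > ·)) (d : β) :
    ∃ t ⊆ s, IsStationary t ∧ ∃ n : ℕ, (∀ x ∈ t, (η x).length = n) ∧
      (∀ i < n, ConstOrStrictMonoOn (fun x => (η x).getD i d) t) ∧
      ∀ i j, i < j → j < n → ∀ x ∈ t, ∀ y ∈ t, (η x).getD i d ≠ (η y).getD j d := by
  obtain ⟨n, hn⟩ : ∃ n : ℕ, IsStationary {x ∈ s | (η x).length = n} :=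
    (isStationary_iUnion_iff_of_countable hα.ne').1 (hs.mono fun x hx => mem_iUnion.2 ⟨_, hx, rfl⟩)
  obtain ⟨t, hts, ht, hF⟩ :=
    hn.exists_subset_forall_lt_constOrStrictMonoOn hα (fun i x => (η x).getD i d) n
  have hdec : ∀ x ∈ t, ∀ i j, i < j → j < n → (η x).getD j d < (η x).getD i d :=
    fun x hx i j hij hjn => (hη x (hts hx).1).rel_getD_of_lt hij ((hts hx).2 ▸ hjn) d
  obtain ⟨C, hC, hne⟩ := exists_isClub_forall_ne_of_forall_lt hα _ n hF hdec
  exact ⟨t ∩ C, fun x hx => (hts hx.1).1, ht.inter_isClub hα.ne' hC, n,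
    fun x hx => (hts hx.1).2, fun i hi => (hF i hi).mono inter_subset_left, hne⟩

end

universe u

theorem Cardinal.IsRegular.cof_Iio_ord {c : Cardinal.{u}} (hc : c.IsRegular) :
    Order.cof (Iio c.ord) = Cardinal.lift.{u + 1} c := by
  rw [Ordinal.cof_Iio, ← Ordinal.lift_cof, hc.cof_ord]

theorem Cardinal.IsRegular.isRegularCardinalOrder_Iio_ord {c : Cardinal.{u}} (hc : c.IsRegular) :
    IsRegularCardinalOrder (Iio c.ord) :=
  ⟨by rw [hc.cof_Iio_ord, Ordinal.type_lt_Iio, Cardinal.lift_ord]⟩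

theorem IsClubIn.isClub_preimage {o : Ordinal} {C : Set Ordinal} (hC : IsClubIn C o) :
    IsClub ((↑) ⁻¹' C : Set (Iio o)) := by
  refine ⟨fun d hd ⟨x, hx⟩ _ a ha => ?_, fun x => ?_⟩
  · by_cases had : a ∈ d
    · exact hd had
    have hlt : ∀ c ∈ d, c.1 < a.1 := fun c hc => (ha.1 hc).lt_of_ne fun h => had (h ▸ hc)
    refine hC.1 a a.2 ⟨(zero_le.trans_lt (hlt x hx)).ne', fun b hba => ?_⟩
    obtain ⟨c, hc, hbc⟩ : ∃ c ∈ d, (⟨b, hba.trans a.2⟩ : Iio o) < c := by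
      by_contra! h
      exact (ha.2 h).not_gt hba
    exact ⟨c, hd hc, hbc, hlt c hc⟩
  · obtain ⟨c, hcC, hxc, hco⟩ := hC.2 x x.2
    exact ⟨⟨c, hco⟩, hcC, hxc.le⟩

theorem IsClub.isClubIn_image {o : Ordinal} (ho : IsSuccLimit o) {C : Set (Iio o)}
    (hC : IsClub C) : IsClubIn ((↑) '' C) o := by
  refine ⟨fun o' ho' ⟨ho'0, hacc⟩ => ?_, fun b hb => ?_⟩
  · obtain ⟨_, ⟨x, hx, rfl⟩, -, hxo'⟩ := hacc 0 (pos_iff_ne_zero.2 ho'0)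
    refine ⟨⟨o', ho'⟩, hC.isLUB_mem (t := {x ∈ C | x.1 < o'}) (fun x hx => hx.1) ⟨x, hx, hxo'⟩
      ⟨fun x hx => hx.2.le, fun u hu => not_lt.1 fun huo' => ?_⟩, rfl⟩
    obtain ⟨_, ⟨c, hc, rfl⟩, huc, hco'⟩ := hacc u huo'
    exact (hu ⟨hc, hco'⟩).not_gt huc
  · obtain ⟨c, hc, hbc⟩ := hC.isCofinal ⟨Order.succ b, ho.succ_lt hb⟩
    exact ⟨c, ⟨c, hc, rfl⟩, (Order.lt_succ b).trans_le hbc, c.2⟩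

theorem IsStationaryIn.isStationary_preimage {o : Ordinal} (ho : IsSuccLimit o) {S : Set Ordinal}
    (hS : IsStationaryIn S o) : IsStationary ((↑) ⁻¹' S : Set (Iio o)) := fun C hC => by
  obtain ⟨_, hx, ⟨x, hxC, rfl⟩⟩ := hS.2 _ (hC.isClubIn_image ho)
  exact ⟨x, hx, hxC⟩

theorem IsStationary.isStationaryIn_image {o : Ordinal} {t : Set (Iio o)} (ht : IsStationary t) :
    IsStationaryIn ((↑) '' t) o := by
  refine ⟨image_subset_iff.2 fun x _ => x.2, fun C hC => ?_⟩
  obtain ⟨x, hxt, hxC⟩ := ht hC.isClub_preimage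
  exact ⟨x, ⟨x, hxt, rfl⟩, hxC⟩

/-- Δ-system lemma for sequences from `des(δ)` indexed by a stationary set. -/
theorem stmt9 (μ : Cardinal) (hreg : μ.IsRegular) (hunc : Cardinal.aleph0 < μ)
    (δ : Ordinal) (S : Set Ordinal) (hS : IsStationaryIn S μ.ord)
    (η : Ordinal → List Ordinal)
    (hη : ∀ α ∈ S, (η α).Pairwise (· > ·) ∧ ∀ x ∈ η α, x < δ) :
    ∃ S' ⊆ S, IsStationaryIn S' μ.ord ∧ ∃ n : ℕ,
      (∀ α ∈ S', (η α).length = n) ∧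
      (∀ i < n,
        (∀ α ∈ S', ∀ β ∈ S', (η α).getD i 0 = (η β).getD i 0) ∨
        (∀ α ∈ S', ∀ β ∈ S', α < β → (η α).getD i 0 < (η β).getD i 0)) ∧
      (∀ i j : ℕ, i < j → j < n →
        ∀ α ∈ S', ∀ β ∈ S', (η α).getD i 0 ≠ (η β).getD j 0) := by
  have := hreg.isRegularCardinalOrder_Iio_ord
  have hα : ℵ₀ < Order.cof (Iio μ.ord) := by
    rw [hreg.cof_Iio_ord]
    simpa using hunc
  obtain ⟨t, hts, ht, n, hlen, hF, hne⟩ :=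
    (hS.isStationary_preimage (isSuccLimit_ord hunc.le)).exists_deltaSystem hα (fun x => η x)
      (fun x hx => (hη x hx).1) 0
  refine ⟨(↑) '' t, image_subset_iff.2 hts, ht.isStationaryIn_image, n, ?_, fun i hi => ?_, ?_⟩
  · simpa only [forall_mem_image] using hlen
  · simpa only [ConstOrStrictMonoOn, StrictMonoOn, forall_mem_image, Subtype.coe_lt_coe]
      using hF i hi
  · simpa only [forall_mem_image] using hne
end

section
/- Let δ be an ordinal and let Φ be a type of a pair (s,t) where lg(η^t) = n. Say Ψ is an extension of Φ if there exist s, t, t' with lg(η^t) = n, lg(η^{t'}) = n', tp(s,t) = Φ, tp(s,t') = Ψ, and η^t is a proper initial segment of η^{t'} (η^t ⋖ η^{t'}). Then any type Φ has only finitely many extensions. -/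
open scoped Classical

/-- `des δ`: finite strictly decreasing sequences of ordinals below `δ`. -/
def des (δ : Ordinal) : Set (List Ordinal) :=
  {l | l.Pairwise (· > ·) ∧ ∀ x ∈ l, x < δ}

/-- An element of the index structure `I_δ`: a quadruple `(ζ, η, g, p)`. -/
structure IElem where
  zeta : Ordinal
  eta : List Ordinal
  g : Ordinal → List (List Ordinal)
  p : Bool

/-- `s` is a valid element of `I_δ` (with `ζ < μ`, `η ∈ des δ`, and `g` a
uniform function with domain `ζ` into `des^{<ω}(δ)`). -/
def Valid (μ δ : Ordinal) (s : IElem) : Prop :=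
  s.zeta < μ ∧ s.eta ∈ des δ ∧
  (∀ β < s.zeta, ∀ l ∈ s.g β, l ∈ des δ) ∧
  (∃ m : ℕ, ∀ β < s.zeta, (s.g β).length = m) ∧
  (∀ i : ℕ, ∃ k : ℕ, ∀ β < s.zeta, ((s.g β).getD i []).length = k) ∧
  (∀ i : ℕ,
    (∀ β < s.zeta, ∀ β' < s.zeta, (s.g β).getD i [] = (s.g β').getD i []) ∨
    (∀ β β' : Ordinal, β < β' → β' < s.zeta →
      List.Lex (· < ·) ((s.g β).getD i []) ((s.g β').getD i [])))

/-- The common length `lg(g^s)` of the values of the uniform function `g^s`. -/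
def lgG (s : IElem) : ℕ := (s.g 0).length

/-- The data recorded by the type `tp(s,t)` of a pair from `I_δ`: the order
relation between `ζ^s` and `ζ^t`, the length of `η^t`, the parities `p^s, p^t`,
the shape of `g^s`, and the relations of `g^s(ζ^t)(i)` to `η^t`. -/
structure PairType where
  ord : Ordering
  lenEta : ℕ
  ps : Bool
  pt : Bool
  lg : ℕ
  coordLen : ℕ → ℕ
  isConst : ℕ → Bool
  constEq : ℕ → ℕ → Bool
  constInit : ℕ → ℕ → Bool
  eqEta : ℕ → Bool
  initEta : ℕ → Bool

/-- The type of the pair `(s,t)`. -/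
noncomputable def tp (s t : IElem) : PairType where
  ord := if s.zeta < t.zeta then .lt else if t.zeta < s.zeta then .gt else .eq
  lenEta := t.eta.length
  ps := s.p
  pt := t.p
  lg := lgG s
  coordLen := fun i => if i < lgG s then ((s.g 0).getD i []).length else 0
  isConst := fun i =>
    if i < lgG s ∧ ∀ β < s.zeta, (s.g β).getD i [] = (s.g 0).getD i [] then true else false
  constEq := fun i j =>
    if i < lgG s ∧ j < lgG s ∧ (s.g 0).getD i [] = (s.g 0).getD j [] then true else false
  constInit := fun i j =>
    if i < lgG s ∧ j < lgG s ∧ (s.g 0).getD i [] <+: (s.g 0).getD j [] ∧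
        (s.g 0).getD i [] ≠ (s.g 0).getD j [] then true else false
  eqEta := fun i =>
    if i < lgG s ∧ (s.g t.zeta).getD i [] = t.eta then true else false
  initEta := fun i =>
    if i < lgG s ∧ (s.g t.zeta).getD i [] <+: t.eta ∧ (s.g t.zeta).getD i [] ≠ t.eta
      then true else false

/-- `Ψ` is an extension of `Φ` (for the lengths `n < n'`): there are `s, t, t'`
with `lg(η^t) = n`, `lg(η^{t'}) = n'`, `tp(s,t) = Φ`, `tp(s,t') = Ψ` and
`η^t ⋖ η^{t'}` (a proper initial segment). -/
def IsExtension (μ δ : Ordinal) (n n' : ℕ) (Φ Ψ : PairType) : Prop :=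
  ∃ s t t' : IElem, Valid μ δ s ∧ Valid μ δ t ∧ Valid μ δ t' ∧
    t.eta.length = n ∧ t'.eta.length = n' ∧
    tp s t = Φ ∧ tp s t' = Ψ ∧ t.eta <+: t'.eta ∧ t.eta ≠ t'.eta

instance : Finite Ordering :=
  Finite.of_injective (fun o => (match o with | .lt => 0 | .eq => 1 | .gt => 2 : Fin 3))
    (by intro a b; cases a <;> cases b <;> simp)

lemma PairType.ext' {a b : PairType}
    (h1 : a.ord = b.ord) (h2 : a.lenEta = b.lenEta) (h3 : a.ps = b.ps)
    (h4 : a.pt = b.pt) (h5 : a.lg = b.lg) (h6 : a.coordLen = b.coordLen)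
    (h7 : a.isConst = b.isConst) (h8 : a.constEq = b.constEq)
    (h9 : a.constInit = b.constInit) (h10 : a.eqEta = b.eqEta)
    (h11 : a.initEta = b.initEta) : a = b := by
  cases a; cases b; simp_all

/-- Reconstruction map used to bound the set of extensions. -/
noncomputable def mkExt (Φ : PairType) (n' : ℕ)
    (q : Ordering × Bool × (Fin Φ.lg → Bool) × (Fin Φ.lg → Bool)) : PairType :=
  ⟨q.1, n', Φ.ps, q.2.1, Φ.lg, Φ.coordLen, Φ.isConst, Φ.constEq, Φ.constInit,
    fun i => if h : i < Φ.lg then q.2.2.1 ⟨i, h⟩ else false,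
    fun i => if h : i < Φ.lg then q.2.2.2 ⟨i, h⟩ else false⟩

/-- Any type `Φ` has only finitely many extensions. -/
theorem stmt17 (μ δ : Ordinal) (n n' : ℕ) (Φ : PairType) :
    {Ψ : PairType | IsExtension μ δ n n' Φ Ψ}.Finite := by
  have hsub : {Ψ : PairType | IsExtension μ δ n n' Φ Ψ} ⊆ Set.range (mkExt Φ n') := by
    rintro Ψ ⟨s, t, t', _, _, _, ht, ht', hΦ, hΨ, _, _⟩
    subst hΦ; subst hΨ
    refine ⟨((tp s t').ord, (tp s t').pt,
      fun i => (tp s t').eqEta i, fun i => (tp s t').initEta i), ?_⟩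
    apply PairType.ext' <;> try rfl
    · exact ht'.symm
    · funext i
      by_cases h : i < lgG s
      · simp [mkExt, tp, h]
      · simp [mkExt, tp, h]
    · funext i
      by_cases h : i < lgG s
      · simp [mkExt, tp, h]
      · simp [mkExt, tp, h]
  exact (Set.finite_range (mkExt Φ n')).subset hsub
end
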